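/- Boris correction preserves Gauss's law: let Ẽ^{m+1} be given and define E^{m+1} = Ẽ^{m+1} − ∇P where P solves −∇·[(λ²/Δt² + n^m)∇P] = (1 − n^m)/Δt² − (λ²/Δt²)∇·E^m, and suppose the discrete relations λ²(Ẽ^{m+1} − E^m)/Δt = ∇×B^{m+1} − J̃^{m+1}, (J^{m+1} − J^{m+1,*})/Δt = n^m E^{m+1}, (J̃^{m+1} − J^{m+1,*})/Δt = n^m Ẽ^{m+1}, and (n^{m+1} − n^m)/Δt = ∇·J^{m+1} hold, with λ²∇·E^m = 1 − n^m. Then λ²∇·E^{m+1} = 1 − n^{m+1}. -/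

import Mathlib

open MeasureTheory Matrix

noncomputable section

abbrev V3 := Fin 3 → ℝ

def pd (j : Fin 3) (g : V3 → ℝ) (x : V3) : ℝ :=
  fderiv ℝ g x (Pi.single j 1)

def vdiv (F : V3 → V3) (x : V3) : ℝ :=
  ∑ j, pd j (fun y => F y j) x

def vcurl (F : V3 → V3) (x : V3) : V3 :=
  ![pd 1 (fun y => F y 2) x - pd 2 (fun y => F y 1) x,
    pd 2 (fun y => F y 0) x - pd 0 (fun y => F y 2) x,
    pd 0 (fun y => F y 1) x - pd 1 (fun y => F y 0) x]

lemma contDiff_pd (j : Fin 3) {f : V3 → ℝ} (hf : ContDiff ℝ (⊤ : ℕ∞) f) :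
    ContDiff ℝ (⊤ : ℕ∞) (pd j f) :=
  (hf.fderiv_right (by simp)).clm_apply contDiff_const

lemma pd_add {j : Fin 3} {x : V3} {f g : V3 → ℝ} (hf : DifferentiableAt ℝ f x)
    (hg : DifferentiableAt ℝ g x) :
    pd j (fun y => f y + g y) x = pd j f x + pd j g x := by
  simp [pd, fderiv_fun_add hf hg]

lemma pd_sub {j : Fin 3} {x : V3} {f g : V3 → ℝ} (hf : DifferentiableAt ℝ f x)
    (hg : DifferentiableAt ℝ g x) :
    pd j (fun y => f y - g y) x = pd j f x - pd j g x := by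
  simp [pd, fderiv_fun_sub hf hg]

lemma pd_const_mul {j : Fin 3} {x : V3} {f : V3 → ℝ} (hf : DifferentiableAt ℝ f x) (c : ℝ) :
    pd j (fun y => c * f y) x = c * pd j f x := by
  simp [pd, fderiv_const_mul hf c]

lemma pd_comm (i j : Fin 3) {f : V3 → ℝ} (hf : ContDiff ℝ (⊤ : ℕ∞) f) (x : V3) :
    pd i (pd j f) x = pd j (pd i f) x := by
  have hd : ∀ y, HasFDerivAt f (fderiv ℝ f y) y :=
    fun y => (hf.differentiable (by simp) y).hasFDerivAt
  have h2 : DifferentiableAt ℝ (fderiv ℝ f) x :=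
    ((hf.fderiv_right (m := (⊤ : ℕ∞)) (by simp)).differentiable (by simp)) x
  have expand : ∀ a b : Fin 3,
      pd a (pd b f) x = fderiv ℝ (fderiv ℝ f) x (Pi.single a 1) (Pi.single b 1) := by
    intro a b
    have h3 : pd b f = fun y => fderiv ℝ f y (Pi.single b 1) := rfl
    rw [pd, h3, fderiv_clm_apply h2 (differentiableAt_const _)]
    simp
  rw [expand, expand,
    second_derivative_symmetric hd h2.hasFDerivAt (Pi.single i 1) (Pi.single j 1)]

lemma vdiv_vcurl {F : V3 → V3} (hF : ContDiff ℝ (⊤ : ℕ∞) F) (x : V3) :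
    vdiv (vcurl F) x = 0 := by
  have hFk : ∀ k : Fin 3, ContDiff ℝ (⊤ : ℕ∞) (fun y => F y k) := fun k => contDiff_pi.mp hF k
  have dAt : ∀ (a k : Fin 3), DifferentiableAt ℝ (pd a (fun y => F y k)) x :=
    fun a k => ((contDiff_pd a (hFk k)).differentiable (by simp)).differentiableAt
  have c0 : (fun y => vcurl F y 0)
      = fun y => pd 1 (fun z => F z 2) y - pd 2 (fun z => F z 1) y := by
    funext y; simp [vcurl]
  have c1 : (fun y => vcurl F y 1)
      = fun y => pd 2 (fun z => F z 0) y - pd 0 (fun z => F z 2) y := by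
    funext y; simp [vcurl]
  have c2 : (fun y => vcurl F y 2)
      = fun y => pd 0 (fun z => F z 1) y - pd 1 (fun z => F z 0) y := by
    funext y; simp [vcurl]
  rw [vdiv, Fin.sum_univ_three, c0, c1, c2,
    pd_sub (dAt _ _) (dAt _ _), pd_sub (dAt _ _) (dAt _ _), pd_sub (dAt _ _) (dAt _ _),
    pd_comm 0 1 (hFk 2), pd_comm 0 2 (hFk 1), pd_comm 1 2 (hFk 0)]
  ring

/-- the Boris correction preserves Gauss's law:
if `λ²∇·E^m = 1 − n^m` holds at step `m`, then `λ²∇·E^{m+1} = 1 − n^{m+1}`. -/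
theorem boris_correction_preserves_gauss
    (Δt lam : ℝ) (hΔt : 0 < Δt) (hlam : 0 ≤ lam)
    (nm nm1 : V3 → ℝ) (P : V3 → ℝ)
    (Em Etil Enew Bm1 Jstar Jtil Jm1 : V3 → V3)
    (hP_smooth : ContDiff ℝ (⊤ : ℕ∞) P)
    (hnm_smooth : ContDiff ℝ (⊤ : ℕ∞) nm)
    (hEm_smooth : ContDiff ℝ (⊤ : ℕ∞) Em) (hEtil_smooth : ContDiff ℝ (⊤ : ℕ∞) Etil)
    (hBm1_smooth : ContDiff ℝ (⊤ : ℕ∞) Bm1)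
    (hJstar_smooth : ContDiff ℝ (⊤ : ℕ∞) Jstar) (hJtil_smooth : ContDiff ℝ (⊤ : ℕ∞) Jtil)
    (hJm1_smooth : ContDiff ℝ (⊤ : ℕ∞) Jm1)
    -- `E^{m+1} = Ẽ^{m+1} − ∇P`
    (hEnew : ∀ x, Enew x = Etil x - fun i => pd i P x)
    -- the Boris correction equation
    -- `−∇·[(λ²/Δt² + n^m)∇P] = (1 − n^m)/Δt² − (λ²/Δt²)∇·E^m`
    (hBoris : ∀ x,
      -vdiv (fun y => (lam ^ 2 / Δt ^ 2 + nm y) • fun i => pd i P y) x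
        = (1 - nm x) / Δt ^ 2 - (lam ^ 2 / Δt ^ 2) * vdiv Em x)
    -- `λ²(Ẽ^{m+1} − E^m)/Δt = ∇×B^{m+1} − J̃^{m+1}`
    (hAmpere : ∀ x, (lam ^ 2 / Δt) • (Etil x - Em x) = vcurl Bm1 x - Jtil x)
    -- `(J^{m+1} − J^{m+1,*})/Δt = n^m E^{m+1}`
    (hJ1 : ∀ x, (1 / Δt) • (Jm1 x - Jstar x) = nm x • Enew x)
    -- `(J̃^{m+1} − J^{m+1,*})/Δt = n^m Ẽ^{m+1}`
    (hJ2 : ∀ x, (1 / Δt) • (Jtil x - Jstar x) = nm x • Etil x)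
    -- discrete continuity `(n^{m+1} − n^m)/Δt = ∇·J^{m+1}`
    (hcont : ∀ x, (nm1 x - nm x) / Δt = vdiv Jm1 x)
    -- Gauss's law at step `m`: `λ²∇·E^m = 1 − n^m`
    (hGauss : ∀ x, lam ^ 2 * vdiv Em x = 1 - nm x) :
    ∀ x, lam ^ 2 * vdiv Enew x = 1 - nm1 x := by
  intro x
  have hΔt' : Δt ≠ 0 := ne_of_gt hΔt
  -- differentiability facts
  have dpdP : ∀ (a j : Fin 3) (y : V3), DifferentiableAt ℝ (pd j P) y :=
    fun a j y => ((contDiff_pd j hP_smooth).differentiable (by simp)).differentiableAt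
  have dEtil : ∀ (j : Fin 3) (y : V3), DifferentiableAt ℝ (fun z => Etil z j) y :=
    fun j y => (((contDiff_pi.mp hEtil_smooth j)).differentiable (by simp)).differentiableAt
  have dEm : ∀ (j : Fin 3) (y : V3), DifferentiableAt ℝ (fun z => Em z j) y :=
    fun j y => (((contDiff_pi.mp hEm_smooth j)).differentiable (by simp)).differentiableAt
  have dJtil : ∀ (j : Fin 3) (y : V3), DifferentiableAt ℝ (fun z => Jtil z j) y :=
    fun j y => (((contDiff_pi.mp hJtil_smooth j)).differentiable (by simp)).differentiableAt
  have dnmP : ∀ (j : Fin 3) (y : V3), DifferentiableAt ℝ (fun z => nm z * pd j P z) y :=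
    fun j y => ((hnm_smooth.mul (contDiff_pd j hP_smooth)).differentiable (by simp)).differentiableAt
  have dcurl : ∀ (j : Fin 3) (y : V3), DifferentiableAt ℝ (fun z => vcurl Bm1 z j) y := by
    intro j y
    have : ContDiff ℝ (⊤ : ℕ∞) (fun z => vcurl Bm1 z j) := by
      have hBk : ∀ k : Fin 3, ContDiff ℝ (⊤ : ℕ∞) (fun z => Bm1 z k) := fun k => contDiff_pi.mp hBm1_smooth k
      fin_cases j <;>
        · simp only [vcurl, Matrix.cons_val_zero, Matrix.cons_val_one, Matrix.head_cons,
            Matrix.cons_val_two, Matrix.tail_cons]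
          exact ContDiff.sub (contDiff_pd _ (hBk _)) (contDiff_pd _ (hBk _))
    exact (this.differentiable (by simp)).differentiableAt
  -- abbreviation: the two key scalar sums
  set S1 : ℝ := ∑ j : Fin 3, pd j (pd j P) x with hS1
  set S2 : ℝ := ∑ j : Fin 3, pd j (fun y => nm y * pd j P y) x with hS2
  -- F1 : vdiv Enew x = vdiv Etil x - S1
  have F1 : vdiv Enew x = vdiv Etil x - S1 := by
    have comp : ∀ j : Fin 3, (fun y => Enew y j) = fun y => Etil y j - pd j P y := by
      intro j; funext y
      have := congrFun (hEnew y) j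
      simpa using this
    rw [vdiv, hS1]
    rw [show (∑ j : Fin 3, pd j (fun y => Enew y j) x)
        = ∑ j : Fin 3, (pd j (fun y => Etil y j) x - pd j (pd j P) x) from
      Finset.sum_congr rfl (fun j _ => by rw [comp j, pd_sub (dEtil j x) (dpdP j j x)]),
      Finset.sum_sub_distrib]
    rfl
  -- F2' : Δt * vdiv Jtil x = -(lam^2) * (vdiv Etil x - vdiv Em x)
  have F2 : Δt * vdiv Jtil x = -(lam ^ 2) * (vdiv Etil x - vdiv Em x) := by
    have comp : ∀ j : Fin 3, (fun y => Jtil y j)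
        = fun y => vcurl Bm1 y j - (lam ^ 2 / Δt) * (Etil y j - Em y j) := by
      intro j; funext y
      have := congrFun (hAmpere y) j
      simp only [Pi.smul_apply, Pi.sub_apply, smul_eq_mul] at this
      linarith
    have hc : vdiv (vcurl Bm1) x = 0 := vdiv_vcurl hBm1_smooth x
    have expand : vdiv Jtil x
        = vdiv (vcurl Bm1) x - (lam ^ 2 / Δt) * (vdiv Etil x - vdiv Em x) := by
      simp only [vdiv]
      rw [show (∑ j : Fin 3, pd j (fun y => Jtil y j) x)
          = ∑ j : Fin 3, (pd j (fun y => vcurl Bm1 y j) x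
              - (lam ^ 2 / Δt) * (pd j (fun y => Etil y j) x - pd j (fun y => Em y j) x)) from
        Finset.sum_congr rfl (fun j _ => by
          rw [comp j, pd_sub (dcurl j x) (((dEtil j x).fun_sub (dEm j x)).const_mul _),
            pd_const_mul ((dEtil j x).fun_sub (dEm j x)), pd_sub (dEtil j x) (dEm j x)]),
        Finset.sum_sub_distrib, ← Finset.mul_sum, Finset.sum_sub_distrib]
    rw [expand, hc] at *
    field_simp
    ring
  -- F3 : vdiv Jm1 x = vdiv Jtil x - Δt * S2
  have F3 : vdiv Jm1 x = vdiv Jtil x - Δt * S2 := by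
    have comp : ∀ j : Fin 3, (fun y => Jm1 y j)
        = fun y => Jtil y j - Δt * (nm y * pd j P y) := by
      intro j; funext y
      have h1 := congrFun (hJ1 y) j
      have h2 := congrFun (hJ2 y) j
      have h3 := congrFun (hEnew y) j
      simp only [Pi.smul_apply, Pi.sub_apply, smul_eq_mul] at h1 h2 h3
      have h1' : Jm1 y j - Jstar y j = Δt * (nm y * Enew y j) := by
        field_simp at h1; linarith
      have h2' : Jtil y j - Jstar y j = Δt * (nm y * Etil y j) := by
        field_simp at h2; linarith
      have : Enew y j = Etil y j - pd j P y := h3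
      rw [this] at h1'
      ring_nf
      ring_nf at h1' h2'
      linarith
    simp only [vdiv, hS2]
    rw [show (∑ j : Fin 3, pd j (fun y => Jm1 y j) x)
        = ∑ j : Fin 3, (pd j (fun y => Jtil y j) x
            - Δt * pd j (fun y => nm y * pd j P y) x) from
      Finset.sum_congr rfl (fun j _ => by
        rw [comp j, pd_sub (dJtil j x) ((dnmP j x).const_mul _),
          pd_const_mul (dnmP j x)]),
      Finset.sum_sub_distrib, ← Finset.mul_sum]
  -- F4' : lam^2 * S1 = -(Δt^2) * S2
  have F4 : lam ^ 2 * S1 = -(Δt ^ 2) * S2 := by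
    have hb := hBoris x
    have hrhs : (1 - nm x) / Δt ^ 2 - lam ^ 2 / Δt ^ 2 * vdiv Em x = 0 := by
      have := hGauss x
      field_simp
      linarith
    rw [hrhs] at hb
    have expand : vdiv (fun y => (lam ^ 2 / Δt ^ 2 + nm y) • fun i => pd i P y) x
        = (lam ^ 2 / Δt ^ 2) * S1 + S2 := by
      simp only [vdiv, hS1, hS2]
      rw [show (∑ j : Fin 3,
            pd j (fun y => ((lam ^ 2 / Δt ^ 2 + nm y) • fun i => pd i P y) j) x)
          = ∑ j : Fin 3, ((lam ^ 2 / Δt ^ 2) * pd j (pd j P) x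
              + pd j (fun y => nm y * pd j P y) x) from
        Finset.sum_congr rfl (fun j _ => by
          have comp : (fun y => ((lam ^ 2 / Δt ^ 2 + nm y) • fun i => pd i P y) j)
              = fun y => (lam ^ 2 / Δt ^ 2) * pd j P y + nm y * pd j P y := by
            funext y; simp [Pi.smul_apply, smul_eq_mul]; ring
          rw [comp, pd_add ((dpdP j j x).const_mul _) (dnmP j x),
            pd_const_mul (dpdP j j x)]),
        Finset.sum_add_distrib, ← Finset.mul_sum]
    rw [expand] at hb
    have : (lam ^ 2 / Δt ^ 2) * S1 + S2 = 0 := by linarith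
    field_simp at this
    linarith
  -- F5 : nm1 x = nm x + Δt * vdiv Jm1 x
  have F5 : nm1 x = nm x + Δt * vdiv Jm1 x := by
    have := hcont x
    field_simp at this
    linarith
  have F6 : lam ^ 2 * vdiv Em x = 1 - nm x := hGauss x
  linear_combination lam ^ 2 * F1 + F2 - F4 + Δt * F3 + F5 + F6
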